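/- arXiv:0908.2236 — 4 statements merged into one kernel-verified Lean document; each statement's English description precedes it below -/
import Mathlib

section
/- For any solution x of the Lane–Emden equation ẍ = -(2/t)ẋ - x^5 on (0,∞), the quantity I(t) = (4t³ x(t)⁶)/3 + 4t³ ẋ(t)² + 4t² x(t) ẋ(t) is constant, i.e. its time derivative vanishes. -/
/-!
Writing `v = ẋ`, the derivative of `I` factors as `4t(x + 2tv)` times `t v̇ + 2v + t x⁵`,
and the second factor is `t` times the Lane–Emden residual `v̇ + (2/t)v + x⁵`.
-/

noncomputable def laneEmdenIntegral (t x v : ℝ) : ℝ :=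
  (4 / 3) * t ^ 3 * x ^ 6 + 4 * t ^ 3 * v ^ 2 + 4 * t ^ 2 * x * v

theorem hasDerivAt_laneEmdenIntegral {x v : ℝ → ℝ} {t a : ℝ}
    (hx : HasDerivAt x (v t) t) (hv : HasDerivAt v a t) :
    HasDerivAt (fun s => laneEmdenIntegral s (x s) (v s))
      (4 * t * (x t + 2 * t * v t) * (t * a + 2 * v t + t * x t ^ 5)) t := by
  have hid : HasDerivAt (fun s : ℝ => s) 1 t := hasDerivAt_id t
  have hI := ((((hid.fun_pow 3).const_mul (4 / 3)).fun_mul (hx.fun_pow 6)).fun_add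
      (((hid.fun_pow 3).const_mul 4).fun_mul (hv.fun_pow 2))).fun_add
      ((((hid.fun_pow 2).const_mul 4).fun_mul hx).fun_mul hv)
  exact hI.congr_deriv (by push_cast; ring)

/-- For any solution `x` of the Lane–Emden equation `ẍ = -(2/t)ẋ - x^5` on `(0,∞)`,
the quantity `I(t) = (4/3)t³x⁶ + 4t³ẋ² + 4t²xẋ` is constant: its derivative vanishes. -/
theorem laneEmden_constant_of_motion
    (x : ℝ → ℝ)
    (hx : ∀ t : ℝ, 0 < t →
      DifferentiableAt ℝ x t ∧ DifferentiableAt ℝ (deriv x) t ∧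
      deriv (deriv x) t = -(2 / t) * deriv x t - x t ^ 5) :
    ∀ t : ℝ, 0 < t →
      deriv (fun s => (4 / 3) * s ^ 3 * x s ^ 6 + 4 * s ^ 3 * (deriv x s) ^ 2
        + 4 * s ^ 2 * x s * deriv x s) t = 0 := by
  intro t ht
  obtain ⟨hx_diff, hv_diff, hlane⟩ := hx t ht
  have hresidual : t * deriv (deriv x) t + 2 * deriv x t + t * x t ^ 5 = 0 := by
    rw [hlane]
    field_simp
    ring
  have hI := hasDerivAt_laneEmdenIntegral hx_diff.hasDerivAt hv_diff.hasDerivAt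
  rw [hresidual, mul_zero] at hI
  exact hI.deriv
end

section
/- For any solution x of ẍ = -(5/(t+K))ẋ - x² on (−K, ∞), the quantity I(t) = (1/3)x³(t+K)⁶ + (1/2)ẋ²(t+K)⁶ + 2xẋ(t+K)⁵ is constant in t. -/
/-!
Writing `y = t + K`, the product rule gives
`I' = y⁴ (y ẋ + 2x) (y (ẍ + x²) + 5ẋ)`,
and the last factor is `y` times the residual of the equation, hence zero.
-/

/-- The quantity `I`, with `v` standing for `ẋ` (the theorem takes `v = deriv x`). -/
noncomputable def emdenInvariant (K : ℝ) (x v : ℝ → ℝ) (s : ℝ) : ℝ :=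
  (1 / 3) * x s ^ 3 * (s + K) ^ 6 + (1 / 2) * v s ^ 2 * (s + K) ^ 6
    + 2 * x s * v s * (s + K) ^ 5

theorem hasDerivAt_emdenInvariant {K t a : ℝ} {x v : ℝ → ℝ}
    (hx : HasDerivAt x (v t) t) (hv : HasDerivAt v a t) :
    HasDerivAt (emdenInvariant K x v)
      ((t + K) ^ 4 * ((t + K) * v t + 2 * x t) * ((t + K) * (a + x t ^ 2) + 5 * v t)) t := by
  have hy : HasDerivAt (fun s : ℝ => s + K) 1 t := (hasDerivAt_id t).add_const K
  have hI := ((((hx.pow 3).const_mul (1 / 3 : ℝ)).mul (hy.pow 6)).add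
    (((hv.pow 2).const_mul (1 / 2 : ℝ)).mul (hy.pow 6))).add
    (((hx.const_mul (2 : ℝ)).mul hv).mul (hy.pow 5))
  refine hI.congr_deriv ?_
  simp only [Pi.pow_apply, Pi.mul_apply]
  push_cast
  ring

/-- For any solution `x` of `ẍ = -(5/(t+K))ẋ - x²` on `(-K,∞)`, the quantity
`I(t) = (1/3)x³(t+K)⁶ + (1/2)ẋ²(t+K)⁶ + 2xẋ(t+K)⁵` is constant in `t`. -/
theorem emden_constant_of_motion_n2
    (K : ℝ) (x : ℝ → ℝ)
    (hx : ∀ t : ℝ, -K < t →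
      DifferentiableAt ℝ x t ∧ DifferentiableAt ℝ (deriv x) t ∧
      deriv (deriv x) t = -(5 / (t + K)) * deriv x t - x t ^ 2) :
    ∀ t : ℝ, -K < t →
      deriv (fun s => (1 / 3) * x s ^ 3 * (s + K) ^ 6
        + (1 / 2) * (deriv x s) ^ 2 * (s + K) ^ 6
        + 2 * x s * deriv x s * (s + K) ^ 5) t = 0 := by
  intro t ht
  obtain ⟨hdx, hddx, hode⟩ := hx t ht
  have hyK : t + K ≠ 0 := by linarith
  have hresidual : (t + K) * (deriv (deriv x) t + x t ^ 2) + 5 * deriv x t = 0 := by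
    rw [hode]
    field_simp
    ring
  change deriv (emdenInvariant K x (deriv x)) t = 0
  rw [(hasDerivAt_emdenInvariant hdx.hasDerivAt hddx.hasDerivAt).deriv, hresidual, mul_zero]
end

section
/- For any solution x of ẍ = -(3/(2(t+K)))ẋ - x^9 on (−K,∞), the function I(t) = (K+t)^{3/2}·(10(K+t)ẋ² + 5ẋx + 2(K+t)x^{10}) is constant in t. -/
/-!
Differentiate `I = (K+t)^c (A (K+t) ẋ² + B ẋ x + C (K+t) x^(n+1))` along
`ẍ = -(c/(K+t)) ẋ - xⁿ`. The `ẋ x` terms cancel because the weight exponent equals the damping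
coefficient `c`, the `ẋ²` terms cancel for `B = A (c-1)`, the `x^(n+1)` terms for `B = C (c+1)`,
and the `ẋ xⁿ` terms for `C (n+1) = 2A`. These conditions are compatible exactly when
`c (n-1) = n+3`; with `A = n+1` they give the coefficients `10, 5, 2` for `n = 9`, `c = 3/2`.
-/

noncomputable def emdenFowlerIntegral (K c : ℝ) (n : ℕ) (x x' : ℝ → ℝ) (s : ℝ) : ℝ :=
  (K + s) ^ c * ((n + 1) * (K + s) * x' s ^ 2 + (n + 1) * (c - 1) * x' s * x s
    + 2 * (K + s) * x s ^ (n + 1))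

theorem hasDerivAt_emdenFowlerIntegral {K c : ℝ} {n : ℕ} {x x' : ℝ → ℝ} {t : ℝ}
    (hc : c * (n - 1) = n + 3) (ht : 0 < K + t) (hx : HasDerivAt x (x' t) t)
    (hx' : HasDerivAt x' (-(c / (K + t)) * x' t - x t ^ n) t) :
    HasDerivAt (emdenFowlerIntegral K c n x x') 0 t := by
  have hu : HasDerivAt (fun s => K + s) 1 t := (hasDerivAt_id t).const_add K
  refine ((hu.rpow_const (p := c) (Or.inl ht.ne')).mul
    ((((hu.const_mul ((n : ℝ) + 1)).mul (hx'.pow 2)).add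
      ((hx'.const_mul (((n : ℝ) + 1) * (c - 1))).mul hx)).add
      ((hu.const_mul 2).mul (hx.pow (n + 1))))).congr_deriv ?_
  rw [Real.rpow_sub_one ht.ne']
  field_simp
  push_cast
  simp only [Pi.add_apply, Pi.mul_apply, Pi.pow_apply]
  linear_combination (-(K + t) ^ c * (K + t) * x t ^ (n + 1)) * hc

/-- For any solution `x` of `ẍ = -(3/(2(t+K)))ẋ - x⁹` on `(-K,∞)`, the function
`I(t) = (K+t)^{3/2}(10(K+t)ẋ² + 5ẋx + 2(K+t)x^{10})` is constant in `t`. -/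
theorem emden_constant_of_motion_n9
    (K : ℝ) (x : ℝ → ℝ)
    (hx : ∀ t : ℝ, -K < t →
      DifferentiableAt ℝ x t ∧ DifferentiableAt ℝ (deriv x) t ∧
      deriv (deriv x) t = -(3 / (2 * (t + K))) * deriv x t - x t ^ 9) :
    ∀ t : ℝ, -K < t →
      deriv (fun s => (K + s) ^ ((3 : ℝ) / 2) *
        (10 * (K + s) * (deriv x s) ^ 2 + 5 * deriv x s * x s
          + 2 * (K + s) * x s ^ 10)) t = 0 := by
  intro t ht
  obtain ⟨hdx, hdx', hode⟩ := hx t ht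
  have hx'' : HasDerivAt (deriv x) (-((3 / 2) / (K + t)) * deriv x t - x t ^ 9) t :=
    hdx'.hasDerivAt.congr_deriv (by rw [hode, add_comm t, div_mul_eq_div_div])
  have hI := hasDerivAt_emdenFowlerIntegral (by norm_num) (by linarith) hdx.hasDerivAt hx''
  refine (congrArg (deriv · t) ?_).trans hI.deriv
  funext s
  norm_num [emdenFowlerIntegral]
end

section
/- Suppose a,b : ℝ → ℝ are continuous and b(t)·exp(-2∫₀ᵗ a) = K for a constant K. Then for any solution x of ẍ = a(t)ẋ + b(t)xⁿ (n ∈ ℕ, n ≥ 2), the quantity I(t) = exp(-2∫₀ᵗ a)·( ẋ²/2 - b(t)x^{n+1}/(n+1) ) is constant. -/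
/-!
Since `b = K e^{2A}` with `A = ∫₀ᵗ a`, the factor `e^{-2A}` cancels in the potential term, so
`I = e^{-2A} ẋ²/2 - K x^{n+1}/(n+1)`. Differentiating, the kinetic part gives
`e^{-2A} ẋ (ẍ - a ẋ) = e^{-2A} b xⁿ ẋ = K xⁿ ẋ`, which is exactly the derivative of the potential part.
-/

open Real

theorem exp_neg_two_mul_mul_exp_two_mul (c : ℝ) : exp (-2 * c) * exp (2 * c) = 1 := by
  rw [← exp_add]; simp

theorem hasDerivAt_pow_succ_div_succ {f : ℝ → ℝ} {f' t : ℝ} (n : ℕ) (hf : HasDerivAt f f' t) :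
    HasDerivAt (fun s => f s ^ (n + 1) / (n + 1 : ℝ)) (f t ^ n * f') t := by
  refine ((hf.fun_pow (n + 1)).div_const (n + 1 : ℝ)).congr_deriv ?_
  push_cast
  field_simp

theorem hasDerivAt_exp_neg_two_mul_mul_sq_div_two {A v : ℝ → ℝ} {α w t : ℝ}
    (hA : HasDerivAt A α t) (hv : HasDerivAt v w t) :
    HasDerivAt (fun s => exp (-2 * A s) * (v s ^ 2 / 2))
      (exp (-2 * A t) * v t * (w - α * v t)) t := by
  refine (((hA.const_mul (-2)).exp).fun_mul ((hv.fun_pow 2).div_const 2)).congr_deriv ?_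
  ring

theorem hasDerivAt_damped_emden_energy {A x v : ℝ → ℝ} {α K t : ℝ} (n : ℕ)
    (hA : HasDerivAt A α t) (hx : HasDerivAt x (v t) t)
    (hv : HasDerivAt v (α * v t + K * exp (2 * A t) * x t ^ n) t) :
    HasDerivAt (fun s => exp (-2 * A s) * (v s ^ 2 / 2) - K * (x s ^ (n + 1) / (n + 1 : ℝ)))
      0 t := by
  refine ((hasDerivAt_exp_neg_two_mul_mul_sq_div_two hA hv).fun_sub
    ((hasDerivAt_pow_succ_div_succ n hx).const_mul K)).congr_deriv ?_
  linear_combination K * v t * x t ^ n * exp_neg_two_mul_mul_exp_two_mul (A t)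

theorem exp_neg_two_mul_mul_sub_of_eq_mul_exp {c v b K y m : ℝ} (hb : b = K * exp (2 * c)) :
    exp (-2 * c) * (v - b * y / m) = exp (-2 * c) * v - K * (y / m) := by
  rw [hb]
  linear_combination (-(K * y / m)) * exp_neg_two_mul_mul_exp_two_mul c

theorem emden_dissipative_constant_of_motion_general
    (n : ℕ) (K : ℝ) (a b : ℝ → ℝ)
    (ha : Continuous a)
    (hbK : ∀ t : ℝ, b t = K * Real.exp (2 * ∫ s in (0 : ℝ)..t, a s))
    (x : ℝ → ℝ)
    (hx : ∀ t : ℝ,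
      DifferentiableAt ℝ x t ∧ DifferentiableAt ℝ (deriv x) t ∧
      deriv (deriv x) t = a t * deriv x t + b t * x t ^ n) :
    ∀ t : ℝ,
      deriv (fun s => Real.exp (-2 * ∫ u in (0 : ℝ)..s, a u) *
        ((deriv x s) ^ 2 / 2 - b s * x s ^ (n + 1) / (n + 1 : ℝ))) t = 0 := by
  intro t
  obtain ⟨hx₁, hx₂, hode⟩ := hx t
  have hA := (ha.integral_hasStrictDerivAt 0 t).hasDerivAt
  simp_rw [exp_neg_two_mul_mul_sub_of_eq_mul_exp (hbK _)]
  refine (hasDerivAt_damped_emden_energy n hA hx₁.hasDerivAt ?_).deriv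
  rw [← hbK, ← hode]
  exact hx₂.hasDerivAt

/-- Suppose `a, b : ℝ → ℝ` are continuous and `b(t)·exp(-2∫₀ᵗ a) = K` for a constant
`K`. Then for any solution `x` of `ẍ = a(t)ẋ + b(t)xⁿ` (`n ∈ ℕ`, `n ≥ 2`), the quantity
`I(t) = exp(-2∫₀ᵗ a)(ẋ²/2 - b(t)x^{n+1}/(n+1))` is constant. -/
theorem emden_dissipative_constant_of_motion
    (n : ℕ) (hn : 2 ≤ n) (K : ℝ) (a b : ℝ → ℝ)
    (ha : Continuous a) (hb : Continuous b)
    (hbK : ∀ t : ℝ, b t = K * Real.exp (2 * ∫ s in (0 : ℝ)..t, a s))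
    (x : ℝ → ℝ)
    (hx : ∀ t : ℝ,
      DifferentiableAt ℝ x t ∧ DifferentiableAt ℝ (deriv x) t ∧
      deriv (deriv x) t = a t * deriv x t + b t * x t ^ n) :
    ∀ t : ℝ,
      deriv (fun s => Real.exp (-2 * ∫ u in (0 : ℝ)..s, a u) *
        ((deriv x s) ^ 2 / 2 - b s * x s ^ (n + 1) / (n + 1 : ℝ))) t = 0 :=
  emden_dissipative_constant_of_motion_general n K a b ha hbK x hx
end
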